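/- arXiv:1911.04857 — 2 statements merged into one kernel-verified Lean document; each statement's English description precedes it below -/
import Mathlib

section
/- For every non-empty bounded set F in R^n and every theta in (0,1), the upper Assouad spectrum of F at theta is at most (upper box dimension of F)/(1 - theta). -/
open Filter MeasureTheory Metric Set

noncomputable section
open scoped Classical

variable {E : Type*}

/-- Minimal number of sets of diameter at most `r` needed to cover `F`. -/
def coverNum [PseudoMetricSpace E] (r : ℝ) (F : Set E) : ℕ :=
  sInf {k : ℕ | ∃ I : Finset (Set E), I.card = k ∧ (∀ U ∈ I, Metric.diam U ≤ r) ∧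
    F ⊆ ⋃ U ∈ I, U}

/-- Maximal cardinality of an `r`-separated subset of `F`. -/
def sepNum [PseudoMetricSpace E] (r : ℝ) (F : Set E) : ℕ :=
  sSup {k : ℕ | ∃ T : Finset E, T.card = k ∧ ↑T ⊆ F ∧
    ∀ x ∈ T, ∀ y ∈ T, x ≠ y → r ≤ dist x y}

/-- Upper box-counting dimension. -/
def ubDim [PseudoMetricSpace E] (F : Set E) : ℝ :=
  limsup (fun r : ℝ => Real.log (coverNum r F) / -Real.log r) (nhdsWithin 0 (Set.Ioi 0))

/-- Lower box-counting dimension. -/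
def lbDim [PseudoMetricSpace E] (F : Set E) : ℝ :=
  liminf (fun r : ℝ => Real.log (coverNum r F) / -Real.log r) (nhdsWithin 0 (Set.Ioi 0))

/-- Packing dimension, via countable covers by compact sets. -/
def packDim [PseudoMetricSpace E] (F : Set E) : ℝ :=
  sInf {d : ℝ | ∃ K : ℕ → Set E, (∀ j, IsCompact (K j)) ∧ F ⊆ ⋃ j, K j ∧
    ∀ j, ubDim (K j) ≤ d}

/-- Assouad dimension. -/
def assouadDim [PseudoMetricSpace E] (F : Set E) : ℝ :=
  sInf {α : ℝ | ∃ C : ℝ, 0 < C ∧ ∀ x ∈ F, ∀ r R : ℝ, 0 < r → r < R →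
    (coverNum r (Metric.ball x R ∩ F) : ℝ) ≤ C * (R / r) ^ α}

/-- Upper Assouad spectrum at `θ`. -/
def upperAssouadSpectrum [PseudoMetricSpace E] (θ : ℝ) (F : Set E) : ℝ :=
  sInf {α : ℝ | ∃ C : ℝ, 0 < C ∧ ∀ x ∈ F, ∀ r R : ℝ, 0 < r → 0 < R →
    r ≤ R ^ (1/θ) → R ^ (1/θ) < R → R < 1 →
    (coverNum r (Metric.ball x R ∩ F) : ℝ) ≤ C * (R / r) ^ α}

/-- Assouad spectrum at `θ` (with `r = R^{1/θ}`). -/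
def assouadSpectrum [PseudoMetricSpace E] (θ : ℝ) (F : Set E) : ℝ :=
  sInf {α : ℝ | ∃ C : ℝ, 0 < C ∧ ∀ x ∈ F, ∀ R : ℝ, 0 < R → R ^ (1/θ) < R → R < 1 →
    (coverNum (R ^ (1/θ)) (Metric.ball x R ∩ F) : ℝ) ≤ C * (R / R ^ (1/θ)) ^ α}

/-- Quasi-Assouad dimension: limit of the upper Assouad spectrum as `θ ↗ 1`. -/
def qaDim [PseudoMetricSpace E] (F : Set E) : ℝ :=
  limsup (fun θ : ℝ => upperAssouadSpectrum θ F) (nhdsWithin 1 (Set.Iio 1))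

/-- The kernel `φ_r^s(x) = min{1, (r/|x|)^s}` (equal to `1` at `x = 0`). -/
def riesz [NormedAddCommGroup E] (s r : ℝ) (x : E) : ℝ :=
  if x = 0 then 1 else min 1 ((r / ‖x‖) ^ s)

/-- The energy of a measure with respect to the kernel `φ_r^s`. -/
def energy [NormedAddCommGroup E] [MeasurableSpace E] (s r : ℝ) (μ : Measure E) : ℝ :=
  ∫ x, ∫ y, riesz s r (x - y) ∂μ ∂μ

/-- The capacity `C_r^s(F)`: reciprocal of the infimal energy over Borel probability
measures supported on the closure of `F`. -/
def capacity [NormedAddCommGroup E] [MeasurableSpace E] (s r : ℝ) (F : Set E) : ℝ :=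
  (sInf {e : ℝ | ∃ μ : Measure E, IsProbabilityMeasure μ ∧ μ (closure F) = 1 ∧
    e = energy s r μ})⁻¹

/-- Upper box dimension profile at exponent `s`. -/
def ubDimProfile [NormedAddCommGroup E] [MeasurableSpace E] (s : ℝ) (F : Set E) : ℝ :=
  limsup (fun r : ℝ => Real.log (capacity s r F) / -Real.log r) (nhdsWithin 0 (Set.Ioi 0))

/-- Lower box dimension profile at exponent `s`. -/
def lbDimProfile [NormedAddCommGroup E] [MeasurableSpace E] (s : ℝ) (F : Set E) : ℝ :=
  liminf (fun r : ℝ => Real.log (capacity s r F) / -Real.log r) (nhdsWithin 0 (Set.Ioi 0))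

/-- Packing dimension profile at exponent `s`. -/
def packDimProfile [NormedAddCommGroup E] [MeasurableSpace E] (s : ℝ) (F : Set E) : ℝ :=
  sInf {d : ℝ | ∃ K : ℕ → Set E, (∀ j, IsCompact (K j)) ∧ F ⊆ ⋃ j, K j ∧
    ∀ j, ubDimProfile s (K j) ≤ d}

/-- The Grassmannian of `m`-dimensional subspaces of `ℝⁿ`. -/
def Grass (n m : ℕ) : Type :=
  {V : Submodule ℝ (EuclideanSpace ℝ (Fin n)) // Module.finrank ℝ V = m}

instance (n m : ℕ) : MeasurableSpace (Grass n m) := ⊤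

/-- Action of the orthogonal group on the Grassmannian. -/
def grassAction {n m : ℕ}
    (g : EuclideanSpace ℝ (Fin n) ≃ₗᵢ[ℝ] EuclideanSpace ℝ (Fin n)) (V : Grass n m) :
    Grass n m :=
  ⟨(V.1).map (g.toLinearEquiv : EuclideanSpace ℝ (Fin n) →ₗ[ℝ] EuclideanSpace ℝ (Fin n)),
    by rw [LinearEquiv.finrank_map_eq]; exact V.2⟩

/-- Image of `F` under orthogonal projection onto the subspace `V`. -/
def projImg {n : ℕ} (V : Submodule ℝ (EuclideanSpace ℝ (Fin n)))
    (F : Set (EuclideanSpace ℝ (Fin n))) : Set (EuclideanSpace ℝ (Fin n)) :=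
  (fun x => (V.orthogonalProjectionOnto x : EuclideanSpace ℝ (Fin n))) '' F

/-- The set of reals `∑_{k≥1} a_k 2^{-k}` with binary digits `a_k ∈ {0,1}` vanishing
outside `S`. -/
def XS (S : Set ℕ) : Set ℝ :=
  {x | ∃ a : ℕ → ℝ, (∀ k, a k = 0 ∨ a k = 1) ∧ (∀ k, k ∉ S → a k = 0) ∧
    x = ∑' k : ℕ, a (k + 1) * (2 : ℝ) ^ (-(k + 1 : ℤ))}

/-- The `n`-fold product `X_S^n ⊆ [0,1]^n`. -/
def XSn (n : ℕ) (S : Set ℕ) : Set (EuclideanSpace ℝ (Fin n)) :=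
  {x | ∀ i, x i ∈ XS S}

/-- Upper density of a set of naturals. -/
def upperDensity (S : Set ℕ) : ℝ :=
  limsup (fun k : ℕ => ((S ∩ Set.Icc 1 k).ncard : ℝ) / k) atTop

/-- Upper Banach density of a set of naturals. -/
def upperBanachDensity (S : Set ℕ) : ℝ :=
  limsup (fun k : ℕ => ⨆ l : ℕ, ((S ∩ Set.Ico l (l + k)).ncard : ℝ) / k) atTop

/-- `F` can be covered by at most `N` axis-parallel cubes of side `δ`. -/
def CoveredByCubes {n : ℕ} (F : Set (EuclideanSpace ℝ (Fin n))) (N δ : ℝ) : Prop :=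
  ∃ I : Finset (EuclideanSpace ℝ (Fin n)), (I.card : ℝ) ≤ N ∧
    F ⊆ ⋃ c ∈ I, {x | ∀ i, x i ∈ Set.Icc (c i) (c i + δ)}

end

/-!
For `s > ubDim F` the limsup gives `N_r(F) ≤ r^{-s}` for small `r`; since `N_r(G) ≤ N_r(F)` for
`G ⊆ F` and `N_r` is antitone in `r`, this becomes a bound `N_r(G) ≤ C r^{-s}` uniform in
`0 < r < 1` and `G ⊆ F`. When `r ≤ R^{1/θ}` we have `r^{θ-1} ≤ R/r`, hence
`r^{-s} ≤ (R/r)^{s/(1-θ)}`.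

Since `ubDim` is a real-valued limsup, the ratio `log N_r(F) / -log r` must also be bounded
above. In `ℝⁿ` a volume comparison bounds `r`-separated subsets of a ball of radius `M` by
`((2M + r)/r)^n` points, and a maximal separated set is a cover.
-/

open Topology Module

lemma Real.sInf_le_of_mem_of_nonneg {s : Set ℝ} {a : ℝ} (ha : a ∈ s) (ha0 : 0 ≤ a) :
    sInf s ≤ a := by
  by_cases h : BddBelow s
  · exact csInf_le h ha
  · exact (Real.sInf_of_not_bddBelow h).trans_le ha0

lemma le_rpow_neg_of_log_div_neg_log_le {x r s : ℝ} (hr0 : 0 < r) (hr1 : r < 1)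
    (h : Real.log x / -Real.log r ≤ s) : x ≤ r ^ (-s) := by
  have hlog : Real.log x ≤ Real.log r * -s := by
    rw [div_le_iff₀ (neg_pos.mpr (Real.log_neg hr0 hr1))] at h
    linarith
  calc x ≤ Real.exp (Real.log x) := Real.le_exp_log x
    _ ≤ Real.exp (Real.log r * -s) := Real.exp_le_exp.mpr hlog
    _ = r ^ (-s) := (Real.rpow_def_of_pos hr0 _).symm

lemma log_div_neg_log_le_of_le_rpow_neg {x r s : ℝ} (hx : 0 ≤ x) (hr0 : 0 < r) (hr1 : r < 1)
    (hs : 0 ≤ s) (h : x ≤ r ^ (-s)) : Real.log x / -Real.log r ≤ s := by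
  rcases hx.eq_or_lt with rfl | hx
  · simpa using hs
  rw [div_le_iff₀ (neg_pos.mpr (Real.log_neg hr0 hr1))]
  have := Real.log_le_log hx h
  rw [Real.log_rpow hr0] at this
  linarith

section PseudoMetric

variable {X : Type*} [PseudoMetricSpace X]

lemma coverNum_le_card {r : ℝ} {F : Set X} (I : Finset (Set X)) (hdiam : ∀ U ∈ I, diam U ≤ r)
    (hcov : F ⊆ ⋃ U ∈ I, U) : coverNum r F ≤ I.card :=
  Nat.sInf_le ⟨I, rfl, hdiam, hcov⟩

lemma coverNum_two_mul_le_card_of_subset_iUnion_ball {r : ℝ} {F : Set X} (hr : 0 ≤ r) (T : Finset X)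
    (hcov : F ⊆ ⋃ t ∈ T, ball t r) : coverNum (2 * r) F ≤ T.card :=
  (coverNum_le_card (T.image (ball · r)) (by simpa using fun t _ => diam_ball hr)
    (by simpa using hcov)).trans Finset.card_image_le

lemma TotallyBounded.exists_card_eq_coverNum {F : Set X} (hF : TotallyBounded F) {r : ℝ}
    (hr : 0 < r) :
    ∃ I : Finset (Set X), I.card = coverNum r F ∧ (∀ U ∈ I, diam U ≤ r) ∧ F ⊆ ⋃ U ∈ I, U := by
  obtain ⟨t, ht, hcov⟩ := totallyBounded_iff.mp hF (r / 2) (half_pos hr)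
  have hdiam : ∀ U ∈ ht.toFinset.image (ball · (r / 2)), diam U ≤ r := by
    simpa using fun y _ => (diam_ball (x := y) (half_pos hr).le).trans_eq (by ring)
  exact Nat.sInf_mem (s := {k : ℕ | ∃ I : Finset (Set X), I.card = k ∧
    (∀ U ∈ I, diam U ≤ r) ∧ F ⊆ ⋃ U ∈ I, U}) ⟨_, _, rfl, hdiam, by simpa using hcov⟩

lemma coverNum_le_coverNum {F G : Set X} {r r' : ℝ} (hF : TotallyBounded F) (hr : 0 < r)
    (hrr' : r ≤ r') (hGF : G ⊆ F) : coverNum r' G ≤ coverNum r F := by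
  obtain ⟨I, hI, hdiam, hcov⟩ := hF.exists_card_eq_coverNum hr
  exact hI ▸ coverNum_le_card I (fun U hU => (hdiam U hU).trans hrr') (hGF.trans hcov)

/-- A maximal `r`-separated subset of `F` is an `r`-net of `F`. -/
lemma coverNum_two_mul_le_of_separated_card_le {F : Set X} {r : ℝ} {N : ℕ} (hr : 0 < r)
    (hN : ∀ T : Finset X, ↑T ⊆ F → (T : Set X).Pairwise (fun x y => r ≤ dist x y) → T.card ≤ N) :
    coverNum (2 * r) F ≤ N := by
  classical
  set S := {k : ℕ | ∃ T : Finset X, T.card = k ∧ ↑T ⊆ F ∧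
    (T : Set X).Pairwise (fun x y => r ≤ dist x y)}
  have hS : BddAbove S := ⟨N, by rintro _ ⟨T, rfl, hTF, hT⟩; exact hN T hTF hT⟩
  obtain ⟨T, hTcard, hTF, hT⟩ : sSup S ∈ S := Nat.sSup_mem ⟨0, ∅, rfl, by simp, by simp⟩ hS
  have hnet : F ⊆ ⋃ t ∈ T, ball t r := by
    intro x hx
    by_contra hfar
    simp only [mem_iUnion, mem_ball, not_exists, not_lt] at hfar
    have hxT : x ∉ T := fun hxT => (hfar x hxT).not_gt (by simpa using hr)
    have hmem : (insert x T).card ∈ S := by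
      refine ⟨_, rfl, by simpa [insert_subset_iff] using ⟨hx, hTF⟩, ?_⟩
      rw [Finset.coe_insert, Set.pairwise_insert]
      exact ⟨hT, fun t ht _ => ⟨hfar t ht, dist_comm x t ▸ hfar t ht⟩⟩
    have := le_csSup hS hmem
    rw [Finset.card_insert_of_notMem hxT] at this
    omega
  exact (coverNum_two_mul_le_card_of_subset_iUnion_ball hr.le T hnet).trans (hN T hTF hT)

lemma ubDim_nonneg {F : Set X}
    (hbdd : IsBoundedUnder (· ≤ ·) (𝓝[>] 0) fun r => Real.log (coverNum r F) / -Real.log r) :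
    0 ≤ ubDim F := by
  refine le_limsup_of_frequently_le (Eventually.frequently ?_) hbdd
  filter_upwards [Ioo_mem_nhdsGT one_pos] with r ⟨hr0, hr1⟩
  exact div_nonneg (Real.log_natCast_nonneg _) (neg_nonneg.mpr (Real.log_nonpos hr0.le hr1.le))

lemma exists_coverNum_le_rpow_of_ubDim_lt {F : Set X} (hF : TotallyBounded F)
    (hbdd : IsBoundedUnder (· ≤ ·) (𝓝[>] 0) fun r => Real.log (coverNum r F) / -Real.log r)
    {s : ℝ} (hs0 : 0 ≤ s) (hs : ubDim F < s) :
    ∃ C > 0, ∀ r, 0 < r → r < 1 → ∀ G ⊆ F, (coverNum r G : ℝ) ≤ C * r ^ (-s) := by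
  obtain ⟨r₀, hr₀, hsmall⟩ :=
    mem_nhdsGT_iff_exists_Ioc_subset.mp (eventually_lt_of_limsup_lt hs hbdd)
  refine ⟨coverNum r₀ F + 1, by positivity, fun r hr0 hr1 G hGF => ?_⟩
  have hrs : 1 ≤ r ^ (-s) :=
    Real.one_le_rpow_of_pos_of_le_one_of_nonpos hr0 hr1.le (neg_nonpos.mpr hs0)
  rcases le_or_gt r r₀ with hle | hlt
  · have hGF' : (coverNum r G : ℝ) ≤ coverNum r F := by
      exact_mod_cast coverNum_le_coverNum hF hr0 le_rfl hGF
    calc (coverNum r G : ℝ) ≤ r ^ (-s) :=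
          hGF'.trans (le_rpow_neg_of_log_div_neg_log_le hr0 hr1
            (hsmall ⟨hr0, hle⟩).le)
      _ ≤ (coverNum r₀ F + 1) * r ^ (-s) := le_mul_of_one_le_left (by positivity) (by simp)
  · have hGF' : (coverNum r G : ℝ) ≤ coverNum r₀ F := by
      exact_mod_cast coverNum_le_coverNum hF hr₀ hlt.le hGF
    calc (coverNum r G : ℝ) ≤ coverNum r₀ F + 1 := by linarith
      _ ≤ (coverNum r₀ F + 1) * r ^ (-s) := le_mul_of_one_le_right (by positivity) hrs

lemma upperAssouadSpectrum_le_of_coverNum_le {F : Set X} {θ s C : ℝ} (hθ : θ ∈ Ioo (0 : ℝ) 1)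
    (hs : 0 ≤ s) (hC : 0 < C)
    (hcov : ∀ r, 0 < r → r < 1 → ∀ G ⊆ F, (coverNum r G : ℝ) ≤ C * r ^ (-s)) :
    upperAssouadSpectrum θ F ≤ s / (1 - θ) := by
  obtain ⟨hθ0, hθ1⟩ := hθ
  have hθ1' : 0 < 1 - θ := sub_pos.mpr hθ1
  refine Real.sInf_le_of_mem_of_nonneg ⟨C, hC, fun x _ r R hr hR hrR hRR hR1 => ?_⟩
    (div_nonneg hs hθ1'.le)
  have hrθ : r ^ θ ≤ R := by
    rwa [one_div, Real.le_rpow_inv_iff_of_pos hr.le hR.le hθ0] at hrR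
  have hbase : r ^ (θ - 1) ≤ R / r := by
    rw [Real.rpow_sub_one hr.ne']
    exact div_le_div_of_nonneg_right hrθ hr.le
  calc (coverNum r (ball x R ∩ F) : ℝ) ≤ C * r ^ (-s) :=
        hcov r hr (hrR.trans_lt (hRR.trans hR1)) _ inter_subset_right
    _ = C * (r ^ (θ - 1)) ^ (s / (1 - θ)) := by
        rw [← Real.rpow_mul hr.le]
        congr 2
        field_simp
        ring
    _ ≤ C * (R / r) ^ (s / (1 - θ)) := by gcongr

end PseudoMetric

section FiniteDimensional

variable {E : Type*} [NormedAddCommGroup E] [NormedSpace ℝ E] [FiniteDimensional ℝ E]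

/-- The balls of radius `r / 2` around the points are disjoint and lie in a ball of radius
`M + r / 2`; compare volumes. -/
lemma card_le_of_pairwise_le_dist {c : E} {M r : ℝ} (hM : 0 ≤ M) (hr : 0 < r) (T : Finset E)
    (hTM : ↑T ⊆ closedBall c M) (hT : (T : Set E).Pairwise (fun x y => r ≤ dist x y)) :
    (T.card : ℝ) ≤ ((2 * M + r) / r) ^ finrank ℝ E := by
  borelize E
  set μ : Measure E := Measure.addHaar
  have hdisj : (T : Set E).PairwiseDisjoint (ball · (r / 2)) := fun x _ y _ hxy =>
    ball_disjoint_ball (by linarith [hT ‹_› ‹_› hxy])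
  have hsub : ⋃ t ∈ T, ball t (r / 2) ⊆ ball c (M + r / 2) :=
    iUnion₂_subset fun t ht => ball_subset_ball' (by linarith [mem_closedBall.mp (hTM ht)])
  have hvol : (T.card : ENNReal) * μ (ball c (r / 2)) ≤ μ (ball c (M + r / 2)) := calc
    (T.card : ENNReal) * μ (ball c (r / 2)) = ∑ t ∈ T, μ (ball t (r / 2)) := by
        simp [Measure.addHaar_ball_center μ _ (r / 2)]
    _ = μ (⋃ t ∈ T, ball t (r / 2)) :=
        (measure_biUnion_finset hdisj fun _ _ => measurableSet_ball).symm
    _ ≤ μ (ball c (M + r / 2)) := measure_mono hsub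
  rw [Measure.addHaar_ball_of_pos μ _ (half_pos hr),
    Measure.addHaar_ball_of_pos μ _ (by positivity : 0 < M + r / 2), ← mul_assoc,
    ENNReal.mul_le_mul_iff_left (measure_ball_pos μ 0 one_pos).ne'
      measure_ball_lt_top.ne, ← ENNReal.ofReal_natCast, ← ENNReal.ofReal_mul (by positivity),
    ENNReal.ofReal_le_ofReal_iff (by positivity), ← le_div_iff₀ (by positivity), ← div_pow] at hvol
  rwa [show (M + r / 2) / (r / 2) = (2 * M + r) / r by field_simp] at hvol

lemma coverNum_le_of_subset_closedBall {F : Set E} {c : E} {M r : ℝ} (hM : 0 ≤ M) (hr : 0 < r)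
    (hF : F ⊆ closedBall c M) : (coverNum r F : ℝ) ≤ ((4 * M + r) / r) ^ finrank ℝ E := by
  have hN : ∀ T : Finset E, ↑T ⊆ F → (T : Set E).Pairwise (fun x y => r / 2 ≤ dist x y) →
      T.card ≤ ⌊((4 * M + r) / r) ^ finrank ℝ E⌋₊ := fun T hTF hT => by
    refine Nat.le_floor <|
      (card_le_of_pairwise_le_dist hM (half_pos hr) T (hTF.trans hF) hT).trans_eq ?_
    congr 1
    field_simp
    ring
  have := coverNum_two_mul_le_of_separated_card_le (half_pos hr) hN
  rw [mul_div_cancel₀ r two_ne_zero] at this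
  exact (Nat.cast_le.mpr this).trans (Nat.floor_le (by positivity))

lemma eventually_coverNum_le_rpow {F : Set E} (hF : Bornology.IsBounded F) :
    ∀ᶠ r in 𝓝[>] 0, (coverNum r F : ℝ) ≤ r ^ (-(2 * finrank ℝ E : ℝ)) := by
  obtain ⟨M, hM, hFM⟩ := hF.subset_closedBall_lt 0 0
  filter_upwards [Ioo_mem_nhdsGT (by positivity : (0 : ℝ) < 1 / (4 * M + 1))]
    with r ⟨hr0, hrM⟩
  have hrM' : r * (4 * M + r) ≤ 1 := by
    rw [lt_div_iff₀ (by positivity)] at hrM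
    nlinarith
  calc (coverNum r F : ℝ) ≤ ((4 * M + r) / r) ^ finrank ℝ E :=
        coverNum_le_of_subset_closedBall hM.le hr0 hFM
    _ ≤ (r⁻¹ ^ 2) ^ finrank ℝ E := by
        gcongr
        rw [div_le_iff₀ hr0]
        field_simp
        linarith
    _ = r ^ (-(2 * finrank ℝ E : ℝ)) := by
        rw [Real.rpow_neg hr0.le, ← pow_mul, inv_pow, ← Real.rpow_natCast]
        norm_cast

lemma isBoundedUnder_log_coverNum_div {F : Set E} (hF : Bornology.IsBounded F) :
    IsBoundedUnder (· ≤ ·) (𝓝[>] 0) fun r => Real.log (coverNum r F) / -Real.log r := by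
  refine isBoundedUnder_of_eventually_le (a := 2 * finrank ℝ E) ?_
  filter_upwards [eventually_coverNum_le_rpow hF, Ioo_mem_nhdsGT one_pos] with r hN ⟨hr0, hr1⟩
  exact log_div_neg_log_le_of_le_rpow_neg (Nat.cast_nonneg _) hr0 hr1 (by positivity) hN

end FiniteDimensional

theorem stmt_1_general {n : ℕ} (F : Set (EuclideanSpace ℝ (Fin n)))
    (hb : Bornology.IsBounded F) (θ : ℝ) (hθ : θ ∈ Set.Ioo (0:ℝ) 1) :
    upperAssouadSpectrum θ F ≤ ubDim F / (1 - θ) := by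
  have hθ1 : 0 < 1 - θ := sub_pos.mpr hθ.2
  have hbdd := isBoundedUnder_log_coverNum_div hb
  refine le_of_forall_pos_le_add fun ε hε => ?_
  have hs : ubDim F < ubDim F + ε * (1 - θ) := lt_add_of_pos_right _ (by positivity)
  have hs0 : 0 ≤ ubDim F + ε * (1 - θ) := (ubDim_nonneg hbdd).trans hs.le
  obtain ⟨C, hC, hcov⟩ := exists_coverNum_le_rpow_of_ubDim_lt
    (hb.isCompact_closure.totallyBounded.subset subset_closure) hbdd hs0 hs
  calc upperAssouadSpectrum θ F ≤ (ubDim F + ε * (1 - θ)) / (1 - θ) :=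
        upperAssouadSpectrum_le_of_coverNum_le hθ hs0 hC hcov
    _ = ubDim F / (1 - θ) + ε := by field_simp

/-- the upper Assouad spectrum is at most `ubDim F / (1-θ)`. -/
theorem stmt_1 {n : ℕ} (F : Set (EuclideanSpace ℝ (Fin n))) (hne : F.Nonempty)
    (hb : Bornology.IsBounded F) (θ : ℝ) (hθ : θ ∈ Set.Ioo (0:ℝ) 1) :
    upperAssouadSpectrum θ F ≤ ubDim F / (1 - θ) :=
  stmt_1_general F hb θ hθ
end

section
/- Covering number of X_S at dyadic scales: for any S subset of N, any x in X_S, and integers 0 <= l < l + k, the set X_S intersected with the ball B(x, 2^{-l}) can be covered by at most 4 * 2^{#(S cap {l, l+1, ..., l+k-1})} intervals of length 2^{-l-k}, and requires at least 2^{#(S cap {l+1, ..., l+k-1})} such intervals (up to an absolute multiplicative constant) to cover. -/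
open Filter MeasureTheory Metric Set

/-!
A point of `X_S` lies within `2^{-N}` above the dyadic sum of its digits up to position `N`.
Upper bound: the digits before position `l` contribute a multiple of `2^{1-l}`, and only two such
multiples are compatible with lying in a ball of radius `2^{-l}`; the digits in `[l, l + k)` form
one of at most `2^{#(S ∩ [l, l+k))}` patterns; this leaves `2 · 2^{#(S ∩ [l, l+k))}` intervals of
length `2^{1-l-k}`, each covered by two intervals of length `2^{-l-k}`.
Lower bound (with constant `1`): prescribing the digits of `x` at the positions in
`S ∩ [l+1, l+k)` arbitrarily gives `2^{#(S ∩ [l+1, l+k))}` points of `X_S` in the ball that are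
pairwise at distance at least `2^{1-l-k}`, so an interval of length `2^{-l-k}` holds at most one.
-/
noncomputable def dyadicSum (A : Finset ℕ) : ℝ := ∑ p ∈ A, (2 : ℝ) ^ (-(p : ℤ))

lemma dyadicSum_nonneg (A : Finset ℕ) : 0 ≤ dyadicSum A :=
  Finset.sum_nonneg fun _ _ => by positivity

lemma dyadicSum_mono {A B : Finset ℕ} (h : A ⊆ B) : dyadicSum A ≤ dyadicSum B :=
  Finset.sum_le_sum_of_subset_of_nonneg h fun _ _ _ => by positivity

lemma dyadicSum_Ico {m n : ℕ} (h : m ≤ n) :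
    dyadicSum (Finset.Ico m n) = 2 ^ (1 - m : ℤ) - 2 ^ (1 - n : ℤ) := by
  induction n, h using Nat.le_induction with
  | base => simp [dyadicSum]
  | succ n hmn ih =>
    rw [dyadicSum, Finset.sum_Ico_succ_top hmn, ← dyadicSum, ih]
    have : (2 : ℝ) ^ (1 - n : ℤ) = 2 * 2 ^ (-(n : ℤ)) := by
      rw [show (1 - n : ℤ) = 1 + -(n : ℤ) by ring, zpow_add₀ two_ne_zero, zpow_one]
    push_cast
    rw [show (1 - (n + 1) : ℤ) = -(n : ℤ) by ring, this]
    ring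

lemma dyadicSum_eq_of_lt {A : Finset ℕ} {n : ℕ} (hA : ∀ p ∈ A, p < n) :
    dyadicSum A = (∑ q ∈ A.image (n - 1 - ·), 2 ^ q : ℕ) * (2 : ℝ) ^ (1 - n : ℤ) := by
  rw [Finset.sum_image fun p hp q hq h => by have := hA p hp; have := hA q hq; omega]
  push_cast
  rw [dyadicSum, Finset.sum_mul]
  refine Finset.sum_congr rfl fun p hp => ?_
  rw [← zpow_natCast, ← zpow_add₀ two_ne_zero]
  congr 1
  have := hA p hp
  omega

lemma injOn_image_reflect (n : ℕ) :
    Set.InjOn (fun A : Finset ℕ => A.image (n - 1 - ·)) {A | ∀ p ∈ A, p < n} := by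
  have hinv : ∀ A : Finset ℕ, (∀ p ∈ A, p < n) →
      (A.image (n - 1 - ·)).image (n - 1 - ·) = A := by
    intro A hA
    rw [Finset.image_image]
    conv_rhs => rw [← Finset.image_id (s := A)]
    exact Finset.image_congr fun p hp => by have := hA p hp; simp; omega
  intro A hA B hB h
  rw [← hinv A hA, ← hinv B hB]
  exact congrArg _ h

lemma le_abs_dyadicSum_sub {A B : Finset ℕ} {n : ℕ} (hA : ∀ p ∈ A, p < n)
    (hB : ∀ p ∈ B, p < n) (hAB : A ≠ B) :
    (2 : ℝ) ^ (1 - n : ℤ) ≤ |dyadicSum A - dyadicSum B| := by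
  set u := ∑ q ∈ A.image (n - 1 - ·), 2 ^ q
  set v := ∑ q ∈ B.image (n - 1 - ·), 2 ^ q
  have huv : (u : ℤ) - v ≠ 0 := sub_ne_zero.mpr <| Nat.cast_injective.ne
    fun h => hAB (injOn_image_reflect n hA hB (Finset.geomSum_injective le_rfl h))
  have h1 : (1 : ℝ) ≤ |(u : ℝ) - v| := by exact_mod_cast Int.one_le_abs huv
  rw [dyadicSum_eq_of_lt hA, dyadicSum_eq_of_lt hB, ← sub_mul, abs_mul,
    abs_of_pos (by positivity : (0 : ℝ) < 2 ^ (1 - n : ℤ))]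
  exact le_mul_of_one_le_left (by positivity) h1

noncomputable def binaryValue (a : ℕ → ℝ) : ℝ := ∑' k : ℕ, a (k + 1) * (2 : ℝ) ^ (-(k + 1 : ℤ))

lemma two_zpow_neg_add_add_one (N k : ℕ) :
    (2 : ℝ) ^ (-((k + N : ℕ) + 1 : ℤ)) = 2 ^ (-(N : ℤ)) / 2 / 2 ^ k := by
  rw [show (-((k + N : ℕ) + 1 : ℤ)) = -(N : ℤ) + -1 + -(k : ℤ) by push_cast; ring,
    zpow_add₀ two_ne_zero, zpow_add₀ two_ne_zero]
  simp only [zpow_neg, zpow_natCast, zpow_one, div_eq_mul_inv]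

section binaryValue

variable {a b : ℕ → ℝ}

lemma summable_binaryValue (h0 : ∀ k, 0 ≤ a k) (h1 : ∀ k, a k ≤ 1) :
    Summable fun k : ℕ => a (k + 1) * (2 : ℝ) ^ (-(k + 1 : ℤ)) := by
  refine (summable_geometric_two' 1).of_nonneg_of_le (fun k => mul_nonneg (h0 _) (by positivity))
    fun k => ?_
  refine (mul_le_of_le_one_left (by positivity) (h1 _)).trans_eq ?_
  simpa using two_zpow_neg_add_add_one 0 k

lemma binaryValue_mem_Icc (h0 : ∀ k, 0 ≤ a k) (h1 : ∀ k, a k ≤ 1) (N : ℕ) :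
    binaryValue a ∈ Icc (∑ p ∈ Finset.Ico 1 (N + 1), a p * (2 : ℝ) ^ (-(p : ℤ)))
      (∑ p ∈ Finset.Ico 1 (N + 1), a p * (2 : ℝ) ^ (-(p : ℤ)) + 2 ^ (-(N : ℤ))) := by
  have hsum := summable_binaryValue h0 h1
  have hhead : ∑ p ∈ Finset.Ico 1 (N + 1), a p * (2 : ℝ) ^ (-(p : ℤ)) =
      ∑ k ∈ Finset.range N, a (k + 1) * (2 : ℝ) ^ (-(k + 1 : ℤ)) := by
    rw [Finset.sum_Ico_eq_sum_range, Nat.add_sub_cancel]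
    exact Finset.sum_congr rfl fun k _ => by rw [add_comm 1 k]; push_cast; rfl
  have htail : ∑' k : ℕ, a (k + N + 1) * (2 : ℝ) ^ (-((k + N : ℕ) + 1 : ℤ)) ≤ 2 ^ (-(N : ℤ)) := by
    rw [← tsum_geometric_two' (2 ^ (-(N : ℤ)))]
    refine ((summable_nat_add_iff N).mpr hsum).tsum_le_tsum (fun k => ?_)
      (summable_geometric_two' _)
    rw [← two_zpow_neg_add_add_one]
    exact mul_le_of_le_one_left (by positivity) (h1 _)
  have htail0 : 0 ≤ ∑' k : ℕ, a (k + N + 1) * (2 : ℝ) ^ (-((k + N : ℕ) + 1 : ℤ)) :=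
    tsum_nonneg fun k => mul_nonneg (h0 _) (by positivity)
  rw [binaryValue, ← hsum.sum_add_tsum_nat_add N, hhead]
  push_cast at htail htail0 ⊢
  constructor <;> linarith

lemma binaryValue_add (ha0 : ∀ k, 0 ≤ a k) (ha1 : ∀ k, a k ≤ 1) (hb0 : ∀ k, 0 ≤ b k)
    (hb1 : ∀ k, b k ≤ 1) : binaryValue (a + b) = binaryValue a + binaryValue b := by
  simp only [binaryValue, Pi.add_apply, add_mul]
  exact (summable_binaryValue ha0 ha1).tsum_add (summable_binaryValue hb0 hb1)

lemma binaryValue_indicator {A : Finset ℕ} (hA : 0 ∉ A) :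
    binaryValue ((A : Set ℕ).indicator 1) = dyadicSum A := by
  set g : ℕ → ℝ := (A : Set ℕ).indicator fun p => (2 : ℝ) ^ (-(p : ℤ)) with hg
  have hfun : (fun k : ℕ => (A : Set ℕ).indicator 1 (k + 1) * (2 : ℝ) ^ (-(k + 1 : ℤ))) =
      fun k => g (k + 1) := by
    funext k
    by_cases hk : k + 1 ∈ A <;>
      simp only [hg, Set.indicator_apply, Finset.mem_coe, hk, if_true, if_false, Pi.one_apply,
        one_mul, zero_mul, Nat.cast_add, Nat.cast_one]
  have hsum : Summable fun k => g (k + 1) :=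
    hfun ▸ summable_binaryValue (Set.indicator_nonneg (by simp)) (Set.indicator_le_self' (by simp))
  rw [binaryValue, hfun, dyadicSum, sum_eq_tsum_indicator, ← hg, tsum_eq_zero_add' hsum]
  simp [hg, hA]

lemma binaryValue_add_indicator (h0 : ∀ k, 0 ≤ a k) (h1 : ∀ k, a k ≤ 1) {A : Finset ℕ}
    (hA : 0 ∉ A) : binaryValue (a + (A : Set ℕ).indicator 1) = binaryValue a + dyadicSum A := by
  rw [binaryValue_add h0 h1 (b := (A : Set ℕ).indicator 1) (Set.indicator_nonneg (by simp))
    (Set.indicator_le_self' (by simp)), binaryValue_indicator hA]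

end binaryValue

section XS

variable {S : Set ℕ}

lemma exists_dyadicSum_approx_of_mem_XS {y : ℝ} (hy : y ∈ XS S) (N : ℕ) :
    ∃ D : Finset ℕ, (∀ p ∈ D, p ≤ N ∧ p ∈ S) ∧
      y ∈ Icc (dyadicSum D) (dyadicSum D + 2 ^ (-(N : ℤ))) := by
  obtain ⟨a, ha, haS, rfl⟩ := hy
  refine ⟨(Finset.Ico 1 (N + 1)).filter (a · = 1), fun p hp => ?_, ?_⟩
  · simp only [Finset.mem_filter, Finset.mem_Ico] at hp
    exact ⟨by omega, by by_contra hpS; simp [haS p hpS] at hp⟩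
  · have hD : ∑ p ∈ Finset.Ico 1 (N + 1), a p * (2 : ℝ) ^ (-(p : ℤ)) =
        dyadicSum ((Finset.Ico 1 (N + 1)).filter (a · = 1)) := by
      rw [dyadicSum, Finset.sum_filter]
      exact Finset.sum_congr rfl fun p _ => by rcases ha p with h | h <;> simp [h]
    rw [← hD]
    exact binaryValue_mem_Icc (fun k => by rcases ha k with h | h <;> simp [h])
      (fun k => by rcases ha k with h | h <;> simp [h]) N

lemma exists_add_dyadicSum_mem_XS {x : ℝ} (hx : x ∈ XS S) {P : Finset ℕ} (hPS : ↑P ⊆ S)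
    (hP0 : 0 ∉ P) :
    ∃ x₀, ∃ A₀ ⊆ P, x = x₀ + dyadicSum A₀ ∧ ∀ A ⊆ P, x₀ + dyadicSum A ∈ XS S := by
  obtain ⟨a, ha, haS, rfl⟩ := hx
  set b : ℕ → ℝ := fun p => if p ∈ P then 0 else a p with hb
  have hbin : ∀ A ⊆ P, ∀ p, (b + (A : Set ℕ).indicator 1 : ℕ → ℝ) p = 0 ∨
      (b + (A : Set ℕ).indicator 1 : ℕ → ℝ) p = 1 := by
    intro A hA p
    by_cases hpA : p ∈ A
    · simp [hb, hpA, hA hpA]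
    · by_cases hpP : p ∈ P <;> simp [hb, hpA, hpP, ha p]
  have hval : ∀ A ⊆ P,
      binaryValue (b + (A : Set ℕ).indicator 1) = binaryValue b + dyadicSum A := by
    intro A hA
    refine binaryValue_add_indicator (fun k => ?_) (fun k => ?_) fun h0 => hP0 (hA h0) <;>
      by_cases hk : k ∈ P <;> rcases ha k with h | h <;> simp [hb, hk, h]
  refine ⟨binaryValue b, P.filter (a · = 1), Finset.filter_subset _ _, ?_, fun A hA => ?_⟩
  · have ha_eq : a = b + ((P.filter (a · = 1) : Finset ℕ) : Set ℕ).indicator 1 := by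
      funext p
      by_cases hpP : p ∈ P <;> rcases ha p with h | h <;> simp [hb, hpP, h]
    rw [← hval _ (Finset.filter_subset _ _), ← ha_eq]
    rfl
  · refine ⟨_, hbin A hA, fun p hpS => ?_, (hval A hA).symm⟩
    have hpP : p ∉ P := fun hp => hpS (hPS hp)
    simpa [hb, hpP, haS p hpS] using fun hpA => hpP (hA hpA)

end XS

lemma Int.eq_floor_add_one_or_two {a s : ℝ} {n : ℤ} (hs : 0 < s) (h₁ : a < n * s)
    (h₂ : n * s < a + 2 * s) : n = ⌊a / s⌋ + 1 ∨ n = ⌊a / s⌋ + 2 := by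
  have hlo : ⌊a / s⌋ < n := Int.floor_lt.mpr ((div_lt_iff₀ hs).mpr h₁)
  have hhi : (n : ℝ) - 2 < ⌊a / s⌋ + 1 :=
    ((lt_div_iff₀ hs).mpr (by linarith)).trans (Int.lt_floor_add_one (a / s))
  have : n < ⌊a / s⌋ + 3 := by exact_mod_cast (by linarith : (n : ℝ) < ⌊a / s⌋ + 3)
  omega

/-- Within distance `R` of `x` only two consecutive values of `n` occur, and each interval of
length `2δ` is split into two halves. -/
lemma exists_card_le_four_Icc_cover (x v : ℝ) {R s δ : ℝ} (hs : 0 < s) (hRδ : R + δ ≤ s) :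
    ∃ J : Finset ℝ, J.card ≤ 4 ∧ ∀ y, |y - x| < R → ∀ n : ℤ,
      y ∈ Icc (n * s + v) (n * s + v + 2 * δ) → ∃ c ∈ J, y ∈ Icc c (c + δ) := by
  set m := ⌊(x - R - 2 * δ - v) / s⌋
  refine ⟨{(m + 1) * s + v, (m + 1) * s + v + δ, (m + 2) * s + v, (m + 2) * s + v + δ},
    Finset.card_le_four, fun y hyx n hy => ?_⟩
  rw [abs_lt] at hyx
  obtain ⟨hy₁, hy₂⟩ := hy
  have hn : n = m + 1 ∨ n = m + 2 :=
    Int.eq_floor_add_one_or_two hs (by linarith) (by linarith)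
  have hcast : (n : ℝ) = m + 1 ∨ (n : ℝ) = m + 2 := by
    rcases hn with h | h <;> [left; right] <;> exact_mod_cast h
  by_cases hyδ : y ≤ n * s + v + δ
  · rcases hcast with h | h <;> rw [h] at hy₁ hyδ
    · exact ⟨(m + 1) * s + v, by simp, hy₁, hyδ⟩
    · exact ⟨(m + 2) * s + v, by simp, hy₁, hyδ⟩
  · rcases hcast with h | h <;> rw [h] at hy₂ hyδ
    · exact ⟨(m + 1) * s + v + δ, by simp, by linarith, by linarith⟩
    · exact ⟨(m + 2) * s + v + δ, by simp, by linarith, by linarith⟩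

lemma exists_Icc_cover_of_forall_mem_lattice (V : Finset ℝ) {Y : Set ℝ} {x R s δ : ℝ}
    (hs : 0 < s) (hRδ : R + δ ≤ s)
    (hY : ∀ y ∈ Y, |y - x| < R ∧ ∃ v ∈ V, ∃ n : ℤ, y ∈ Icc (n * s + v) (n * s + v + 2 * δ)) :
    ∃ I : Finset ℝ, I.card ≤ 4 * V.card ∧ Y ⊆ ⋃ c ∈ I, Icc c (c + δ) := by
  choose J hJcard hJ using fun v => exists_card_le_four_Icc_cover x v hs hRδ
  refine ⟨V.biUnion J, ?_, fun y hy => ?_⟩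
  · rw [mul_comm]
    exact Finset.card_biUnion_le_card_mul V J 4 fun v _ => hJcard v
  · obtain ⟨hyx, v, hv, n, hyn⟩ := hY y hy
    obtain ⟨c, hc, hyc⟩ := hJ v y hyx n hyn
    exact mem_iUnion₂.mpr ⟨c, Finset.mem_biUnion.mpr ⟨v, hv, hc⟩, hyc⟩

lemma card_le_card_of_separated_of_subset_Icc {ι : Type*} {s : Finset ι} {f : ι → ℝ} {δ : ℝ}
    (hsep : ∀ i ∈ s, ∀ j ∈ s, i ≠ j → δ < |f i - f j|) {I : Finset ℝ}
    (hI : ∀ i ∈ s, f i ∈ ⋃ c ∈ I, Icc c (c + δ)) : s.card ≤ I.card := by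
  refine Finset.card_le_card_of_forall_subsingleton (fun i c => f i ∈ Icc c (c + δ))
    (fun i hi => by simpa only [mem_iUnion₂, exists_prop] using hI i hi) fun c _ i hi j hj => ?_
  by_contra hij
  obtain ⟨⟨his, hi₁, hi₂⟩, ⟨hjs, hj₁, hj₂⟩⟩ := And.intro hi hj
  exact (hsep i his j hjs hij).not_ge (abs_sub_le_iff.mpr ⟨by linarith, by linarith⟩)

lemma ncard_inter_Ico (S : Set ℕ) [DecidablePred (· ∈ S)] (m n : ℕ) :
    (S ∩ Ico m n).ncard = ((Finset.Ico m n).filter (· ∈ S)).card := by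
  rw [← Set.ncard_coe_finset, Finset.coe_filter]
  congr 1
  ext p
  simp [and_comm]

lemma exists_card_le_cover_XS_inter_ball (S : Set ℕ) [DecidablePred (· ∈ S)] (x : ℝ) (l : ℕ)
    {k : ℕ} (hk : 0 < k) :
    ∃ I : Finset ℝ, I.card ≤ 4 * 2 ^ ((Finset.Ico l (l + k)).filter (· ∈ S)).card ∧
      XS S ∩ ball x ((2 : ℝ) ^ (-(l : ℤ))) ⊆
        ⋃ c ∈ I, Icc c (c + (2 : ℝ) ^ (-(l : ℤ) - (k : ℤ))) := by
  set F := (Finset.Ico l (l + k)).filter (· ∈ S)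
  have hV : (F.powerset.image dyadicSum).card ≤ 2 ^ F.card :=
    Finset.card_image_le.trans (Finset.card_powerset F).le
  have htwo : (2 : ℝ) ^ (-((l + k - 1 : ℕ) : ℤ)) = 2 * 2 ^ (-(l : ℤ) - (k : ℤ)) := by
    rw [← zpow_one_add₀ two_ne_zero]
    congr 1
    omega
  have hs : (2 : ℝ) ^ (1 - l : ℤ) = 2 ^ (-(l : ℤ)) + 2 ^ (-(l : ℤ)) := by
    rw [← two_mul, ← zpow_one_add₀ two_ne_zero]
    ring_nf
  have hY : ∀ y ∈ XS S ∩ ball x ((2 : ℝ) ^ (-(l : ℤ))), |y - x| < 2 ^ (-(l : ℤ)) ∧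
      ∃ v ∈ F.powerset.image dyadicSum, ∃ n : ℤ, y ∈ Icc (n * 2 ^ (1 - l : ℤ) + v)
        (n * 2 ^ (1 - l : ℤ) + v + 2 * 2 ^ (-(l : ℤ) - (k : ℤ))) := by
    rintro y ⟨hy, hyx⟩
    refine ⟨hyx, ?_⟩
    obtain ⟨D, hD, hyD⟩ := exists_dyadicSum_approx_of_mem_XS hy (l + k - 1)
    have hsplit : dyadicSum D = dyadicSum (D.filter (· < l)) + dyadicSum (D.filter (¬ · < l)) :=
      (Finset.sum_filter_add_sum_filter_not D _ _).symm
    have hhigh : D.filter (¬ · < l) ∈ F.powerset := by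
      refine Finset.mem_powerset.mpr fun p hp => ?_
      obtain ⟨hpD, hpl⟩ := Finset.mem_filter.mp hp
      obtain ⟨hpN, hpS⟩ := hD p hpD
      exact Finset.mem_filter.mpr ⟨Finset.mem_Ico.mpr ⟨not_lt.mp hpl, by omega⟩, hpS⟩
    refine ⟨_, Finset.mem_image_of_mem _ hhigh,
      ((∑ q ∈ (D.filter (· < l)).image (l - 1 - ·), 2 ^ q : ℕ) : ℤ), ?_⟩
    rw [Int.cast_natCast, ← dyadicSum_eq_of_lt fun p hp => (Finset.mem_filter.mp hp).2, ← hsplit,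
      ← htwo]
    exact hyD
  obtain ⟨I, hIcard, hI⟩ := exists_Icc_cover_of_forall_mem_lattice _ (by positivity)
    (by rw [hs]; gcongr; exacts [one_le_two, by omega]) hY
  exact ⟨I, hIcard.trans (Nat.mul_le_mul_left 4 hV), hI⟩

lemma two_pow_card_le_card_of_XS_inter_ball_subset {S : Set ℕ} [DecidablePred (· ∈ S)] {x : ℝ}
    (hx : x ∈ XS S) (l k : ℕ) {I : Finset ℝ}
    (hI : XS S ∩ ball x ((2 : ℝ) ^ (-(l : ℤ))) ⊆
      ⋃ c ∈ I, Icc c (c + (2 : ℝ) ^ (-(l : ℤ) - (k : ℤ)))) :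
    2 ^ ((Finset.Ico (l + 1) (l + k)).filter (· ∈ S)).card ≤ I.card := by
  set P := (Finset.Ico (l + 1) (l + k)).filter (· ∈ S)
  have hP : ∀ p ∈ P, l + 1 ≤ p ∧ p < l + k ∧ p ∈ S := fun p hp => by
    obtain ⟨hp, hpS⟩ := Finset.mem_filter.mp hp
    exact ⟨(Finset.mem_Ico.mp hp).1, (Finset.mem_Ico.mp hp).2, hpS⟩
  obtain ⟨x₀, A₀, hA₀, rfl, hmem⟩ := exists_add_dyadicSum_mem_XS hx
    (fun p hp => (hP p hp).2.2) fun h => by have := hP 0 h; omega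
  have hPsum : dyadicSum P < 2 ^ (-(l : ℤ)) := by
    have hIco := dyadicSum_Ico (show l + 1 ≤ l + k + 1 by omega)
    rw [show (1 - ((l + 1 : ℕ) : ℤ)) = -(l : ℤ) by push_cast; ring] at hIco
    have := dyadicSum_mono (show P ⊆ Finset.Ico (l + 1) (l + k + 1) from fun p hp =>
      Finset.mem_Ico.mpr ⟨(hP p hp).1, by have := (hP p hp).2.1; omega⟩)
    have : (0 : ℝ) < 2 ^ (1 - ((l + k + 1 : ℕ) : ℤ)) := by positivity
    linarith
  rw [← Finset.card_powerset]
  refine card_le_card_of_separated_of_subset_Icc (f := fun A => x₀ + dyadicSum A)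
    (fun A hA B hB hAB => ?_) fun A hA => hI ⟨hmem A (Finset.mem_powerset.mp hA), ?_⟩
  · have hlt : ∀ C ∈ P.powerset, ∀ p ∈ C, p < l + k := fun C hC p hp =>
      (hP p (Finset.mem_powerset.mp hC hp)).2.1
    rw [add_sub_add_left_eq_sub]
    calc (2 : ℝ) ^ (-(l : ℤ) - (k : ℤ)) < 2 ^ (1 - ((l + k : ℕ) : ℤ)) :=
          zpow_lt_zpow_right₀ one_lt_two (by push_cast; omega)
      _ ≤ _ := le_abs_dyadicSum_sub (hlt A hA) (hlt B hB) hAB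
  · have hA := Finset.mem_powerset.mp hA
    rw [mem_ball, Real.dist_eq, add_sub_add_left_eq_sub]
    refine lt_of_le_of_lt (abs_sub_le_iff.mpr ⟨?_, ?_⟩) hPsum
    · linarith [dyadicSum_mono hA, dyadicSum_nonneg A₀]
    · linarith [dyadicSum_mono hA₀, dyadicSum_nonneg A]

/-- covering numbers of `X_S` at dyadic scales. -/
theorem stmt_13 :
    ∃ c : ℝ, 0 < c ∧ ∀ (S : Set ℕ) (x : ℝ), x ∈ XS S → ∀ l k : ℕ, 0 < k →
      (∃ I : Finset ℝ, (I.card : ℝ) ≤ 4 * 2 ^ ((S ∩ Set.Ico l (l + k)).ncard) ∧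
        XS S ∩ Metric.ball x ((2:ℝ) ^ (-(l : ℤ))) ⊆
          ⋃ a ∈ I, Set.Icc a (a + (2:ℝ) ^ (-(l : ℤ) - (k : ℤ)))) ∧
      (∀ I : Finset ℝ,
        XS S ∩ Metric.ball x ((2:ℝ) ^ (-(l : ℤ))) ⊆
          ⋃ a ∈ I, Set.Icc a (a + (2:ℝ) ^ (-(l : ℤ) - (k : ℤ))) →
        c * 2 ^ ((S ∩ Set.Ico (l + 1) (l + k)).ncard) ≤ (I.card : ℝ)) := by
  classical
  refine ⟨1, one_pos, fun S x hx l k hk => ⟨?_, fun I hI => ?_⟩⟩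
  · obtain ⟨I, hIcard, hI⟩ := exists_card_le_cover_XS_inter_ball S x l hk
    exact ⟨I, by rw [ncard_inter_Ico]; exact_mod_cast hIcard, hI⟩
  · rw [one_mul, ncard_inter_Ico]
    exact_mod_cast two_pow_card_le_card_of_XS_inter_ball_subset hx l k hI
end
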